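/- Assume that for every δ ≥ 0 and every data y^δ with ‖y − y^δ‖ ≤ δ the functional Φ^δ is convex on B_{6ρ}(x₀) and ∇Φ^δ is Lipschitz continuous with the uniform constant L on B_{6ρ}(x₀). Let τ > 1 and define the stopping index k* = k*(δ, y^δ) by the discrepancy principle: k* is the smallest integer k ≥ 0 with ‖F(x_k^δ) − y^δ‖ ≤ τδ. Let S := { x ∈ B_{2ρ}(x₀) : F(x) = y }. Then: (i) k* is finite for every δ > 0 and k* = O(δ⁻¹) as δ → 0; (ii) for every sequence δ_n > 0 with δ_n → 0 and data y_n with ‖y − y_n‖ ≤ δ_n there exist x̃ ∈ S and a subsequence of (x_{k*(δ_n, y_n)}^{δ_n}) converging weakly to x̃; (iii) if S is a singleton {x̃}, the whole sequence (x_{k*(δ_n, y_n)}^{δ_n}) converges weakly to x̃. -/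

import Mathlib

open Metric Filter
open scoped RealInnerProductSpace Topology

/-!
With `t k = (k + α - 2) / (α - 1)` (so that `t (k+1) ^ 2 - t (k+1) ≤ t k ^ 2` because `α ≥ 3`) and
a minimiser `m` of the convex, `L`-smooth functional `Φ^δ` on `B_{2ρ}(x₀)`, the energy
`2ω t_k² (Φ^δ(x_k) - Φ^δ(m)) + ‖t_k x_k - (t_k - 1) x_{k-1} - m‖²` of the projected Nesterov
scheme is nonincreasing. As `Φ^δ(m) ≤ Φ^δ(x_*) ≤ δ²/2`, this gives
`‖F(x_k^δ) - y^δ‖ ≤ δ + c_δ / (k + α - 2)` with `c_δ` bounded for `δ ≤ 1`, so the discrepancy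
principle stops after `O(δ⁻¹)` steps. The stopped iterates stay in `B_{2ρ}(x₀)` and their
residuals against `y` tend to `0`; weak sequential compactness of balls and weak sequential
closedness of `F` then give (ii), and the subsequence principle gives (iii).
-/

section WeakConvergence

variable {X : Type*} [NormedAddCommGroup X] [InnerProductSpace ℝ X]

def WeaklyTendsto (u : ℕ → X) (w : X) : Prop :=
  ∀ h : X, Tendsto (fun n => ⟪u n, h⟫) atTop (𝓝 ⟪w, h⟫)

theorem WeaklyTendsto.sub_const {u : ℕ → X} {w : X} (hw : WeaklyTendsto u w) (c : X) :
    WeaklyTendsto (fun n => u n - c) (w - c) := fun h => by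
  simpa only [inner_sub_left] using (hw h).sub_const ⟪c, h⟫

theorem WeaklyTendsto.norm_le {u : ℕ → X} {w : X} {r : ℝ} (hw : WeaklyTendsto u w)
    (hu : ∀ n, ‖u n‖ ≤ r) : ‖w‖ ≤ r := by
  have hr : 0 ≤ r := (norm_nonneg _).trans (hu 0)
  have hsq : ‖w‖ ^ 2 ≤ r * ‖w‖ := by
    rw [← real_inner_self_eq_norm_sq]
    refine le_of_tendsto (hw w) (Eventually.of_forall fun n => ?_)
    exact (real_inner_le_norm _ _).trans (mul_le_mul_of_nonneg_right (hu n) (norm_nonneg _))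
  nlinarith [norm_nonneg w]

theorem WeaklyTendsto.mem_closedBall {u : ℕ → X} {w c : X} {r : ℝ} (hw : WeaklyTendsto u w)
    (hu : ∀ n, u n ∈ closedBall c r) : w ∈ closedBall c r := by
  simp only [mem_closedBall_iff_norm] at hu ⊢
  exact (hw.sub_const c).norm_le hu

/-- Sequential Banach–Alaoglu, applied in the separable closed span of the sequence. -/
theorem exists_strictMono_weaklyTendsto [CompleteSpace X] {u : ℕ → X} {R : ℝ}
    (hu : ∀ n, ‖u n‖ ≤ R) : ∃ (w : X) (φ : ℕ → ℕ), StrictMono φ ∧ WeaklyTendsto (u ∘ φ) w := by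
  set M : Submodule ℝ X := (Submodule.span ℝ (Set.range u)).topologicalClosure
  have : CompleteSpace M := (Submodule.isClosed_topologicalClosure _).completeSpace_coe
  have : TopologicalSpace.SeparableSpace M :=
    (Set.countable_range u).isSeparable.span.closure.separableSpace
  have huM (n : ℕ) : u n ∈ M := Submodule.le_topologicalClosure _ (Submodule.subset_span ⟨n, rfl⟩)
  set f : ℕ → WeakDual ℝ M := fun n =>
    StrongDual.toWeakDual (InnerProductSpace.toDual ℝ M ⟨u n, huM n⟩)
  have hf (n : ℕ) : f n ∈ WeakDual.toStrongDual ⁻¹' closedBall 0 R := by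
    change dist (InnerProductSpace.toDual ℝ M ⟨u n, huM n⟩) 0 ≤ R
    rw [dist_zero_right, LinearIsometryEquiv.norm_map]
    exact hu n
  obtain ⟨g, -, φ, hφ, hg⟩ := WeakDual.isSeqCompact_closedBall ℝ M 0 R hf
  refine ⟨(InnerProductSpace.toDual ℝ M).symm (WeakDual.toStrongDual g), φ, hφ, fun h => ?_⟩
  have := ((WeakDual.eval_continuous (M.orthogonalProjectionOnto h)).tendsto g).comp hg
  rw [← Submodule.inner_orthogonalProjectionOnto_eq_of_mem_left,
    InnerProductSpace.toDual_symm_apply]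
  simpa [f, Function.comp_def] using this

theorem exists_strictMono_weaklyTendsto_of_mem_closedBall [CompleteSpace X] {u : ℕ → X} {c : X}
    {R : ℝ} (hu : ∀ n, u n ∈ closedBall c R) :
    ∃ w ∈ closedBall c R, ∃ φ : ℕ → ℕ, StrictMono φ ∧ WeaklyTendsto (u ∘ φ) w := by
  obtain ⟨w, φ, hφ, hw⟩ := exists_strictMono_weaklyTendsto (u := u) (R := ‖c‖ + R) fun n => by
    linarith [norm_le_norm_add_norm_sub' (u n) c, mem_closedBall_iff_norm.1 (hu n)]
  exact ⟨w, hw.mem_closedBall fun n => hu (φ n), φ, hφ, hw⟩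

end WeakConvergence

theorem Convex.real_inner_sub_sub_nonpos {X : Type*} [NormedAddCommGroup X]
    [InnerProductSpace ℝ X] {K : Set X} (hK : Convex ℝ K) {w p : X} (hp : p ∈ K)
    (hmin : ∀ v ∈ K, ‖w - p‖ ≤ ‖w - v‖) {v : X} (hv : v ∈ K) : ⟪w - p, v - p⟫ ≤ 0 := by
  refine (norm_eq_iInf_iff_real_inner_le_zero hK hp).mp (le_antisymm ?_ ?_) v hv
  · have : Nonempty K := ⟨⟨p, hp⟩⟩
    exact le_ciInf fun v => hmin v v.2
  · exact ciInf_le ⟨0, Set.forall_mem_range.2 fun _ => norm_nonneg _⟩ (⟨p, hp⟩ : K)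

theorem forall_mem_of_succ_eq {α β : Type*} {K : Set α} {x : ℕ → α} {P : β → α} {w : ℕ → β}
    (h0 : x 0 ∈ K) (hP : ∀ u, P u ∈ K) (hx : ∀ k, x (k + 1) = P (w k)) : ∀ k, x k ∈ K
  | 0 => h0
  | k + 1 => hx k ▸ hP _

theorem tendsto_of_norm_sub_le_mul {Y : Type*} [SeminormedAddCommGroup Y] {f g : ℕ → Y} {y : Y}
    {δ : ℕ → ℝ} {τ : ℝ} (hδ : Tendsto δ atTop (𝓝 0)) (hf : ∀ n, ‖f n - g n‖ ≤ τ * δ n)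
    (hg : ∀ n, ‖y - g n‖ ≤ δ n) : Tendsto f atTop (𝓝 y) := by
  refine tendsto_iff_norm_sub_tendsto_zero.2 (squeeze_zero (fun _ => norm_nonneg _)
    (fun n => ?_) (by simpa using hδ.const_mul (τ + 1)))
  linarith [norm_sub_le_norm_sub_add_norm_sub (f n) (g n) y, hf n, norm_sub_rev y (g n), hg n]

theorem add_smul_sub_mem_closedBall {E : Type*} [SeminormedAddCommGroup E] [NormedSpace ℝ E]
    {a b c : E} {r β : ℝ} (ha : a ∈ closedBall c r) (hb : b ∈ closedBall c r) (hβ : |β| ≤ 1) :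
    a + β • (a - b) ∈ closedBall c (3 * r) := by
  rw [mem_closedBall_iff_norm] at *
  have hab : ‖a - b‖ ≤ 2 * r := by
    rw [← sub_sub_sub_cancel_right a b c]; linarith [norm_sub_le (a - c) (b - c)]
  calc ‖a + β • (a - b) - c‖ = ‖(a - c) + β • (a - b)‖ := by congr 1; abel
    _ ≤ ‖a - c‖ + |β| * ‖a - b‖ := by rw [← Real.norm_eq_abs, ← norm_smul]; exact norm_add_le _ _
    _ ≤ 3 * r := by nlinarith [norm_nonneg (a - b), abs_nonneg β]

section ConvexSmooth

variable {X : Type*} [NormedAddCommGroup X] [InnerProductSpace ℝ X] [CompleteSpace X]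
  {s : Set X} {Φ : X → ℝ} {G : X → X}

theorem HasGradientAt.hasDerivAt_comp_lineMap {a b : X} {t : ℝ} {g : X}
    (hg : HasGradientAt Φ g (AffineMap.lineMap a b t)) :
    HasDerivAt (Φ ∘ AffineMap.lineMap a b) ⟪g, b - a⟫ t := by
  simpa using (hasGradientAt_iff_hasFDerivAt.mp hg).comp_hasDerivAt t
    (AffineMap.hasDerivAt_lineMap (a := a) (b := b) (x := t))

theorem ConvexOn.add_inner_sub_le (hΦ : ConvexOn ℝ s Φ) {a b g : X} (ha : a ∈ s) (hb : b ∈ s)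
    (hg : HasGradientAt Φ g a) : Φ a + ⟪g, b - a⟫ ≤ Φ b := by
  have hslope := (hΦ.comp_affineMap (AffineMap.lineMap a b)).le_slope_of_hasDerivAt
    (by simpa using ha) (by simpa using hb) zero_lt_one
    (HasGradientAt.hasDerivAt_comp_lineMap (t := 0) (by simpa using hg))
  simp only [slope_def_field, Function.comp_apply, AffineMap.lineMap_apply_one,
    AffineMap.lineMap_apply_zero, sub_zero, div_one] at hslope
  linarith

theorem Convex.le_add_inner_sub_add_sq (hs : Convex ℝ s) {L : ℝ}
    (hG : ∀ u ∈ s, HasGradientAt Φ (G u) u)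
    (hLip : ∀ u ∈ s, ∀ v ∈ s, ‖G u - G v‖ ≤ L * ‖u - v‖) {a b : X} (ha : a ∈ s) (hb : b ∈ s) :
    Φ b ≤ Φ a + ⟪G a, b - a⟫ + L / 2 * ‖b - a‖ ^ 2 := by
  set ℓ := AffineMap.lineMap (k := ℝ) a b
  have hℓ : ∀ t ∈ Set.Icc (0 : ℝ) 1, ℓ t ∈ s := fun t ht => hs.lineMap_mem ha hb ht
  set ψ : ℝ → ℝ := fun t => Φ (ℓ t) - t * ⟪G a, b - a⟫ - L / 2 * ‖b - a‖ ^ 2 * t ^ 2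
  have hψ : ∀ t ∈ Set.Icc (0 : ℝ) 1, HasDerivAt ψ
      (⟪G (ℓ t), b - a⟫ - ⟪G a, b - a⟫ - L * ‖b - a‖ ^ 2 * t) t := fun t ht => by
    have := ((((hG _ (hℓ t ht)).hasDerivAt_comp_lineMap).sub
      ((hasDerivAt_id t).mul_const ⟪G a, b - a⟫)).sub
      ((hasDerivAt_pow 2 t).const_mul (L / 2 * ‖b - a‖ ^ 2)))
    exact this.congr_deriv
      (by simp only [one_mul, Nat.cast_ofNat, Nat.add_one_sub_one, pow_one]; ring)
  have hanti : AntitoneOn ψ (Set.Icc 0 1) := by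
    refine antitoneOn_of_hasDerivWithinAt_nonpos (convex_Icc 0 1)
      (fun t ht => (hψ t ht).continuousAt.continuousWithinAt)
      (fun t ht => (hψ t (interior_subset ht)).hasDerivWithinAt) fun t ht => ?_
    rw [interior_Icc] at ht
    have hlip : ⟪G (ℓ t) - G a, b - a⟫ ≤ L * ‖b - a‖ ^ 2 * t := calc
      _ ≤ ‖G (ℓ t) - G a‖ * ‖b - a‖ := real_inner_le_norm _ _
      _ ≤ L * ‖ℓ t - a‖ * ‖b - a‖ := by
        gcongr; exact hLip _ (hℓ t (Set.Ioo_subset_Icc_self ht)) a ha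
      _ = L * ‖b - a‖ ^ 2 * t := by
        rw [AffineMap.lineMap_apply_module', add_sub_cancel_right, norm_smul,
          Real.norm_of_nonneg ht.1.le]
        ring
    rw [inner_sub_left] at hlip
    linarith
  have := hanti (Set.left_mem_Icc.2 zero_le_one) (Set.right_mem_Icc.2 zero_le_one) zero_le_one
  simp only [ψ, ℓ, AffineMap.lineMap_apply_one, AffineMap.lineMap_apply_zero] at this
  linarith

theorem two_mul_sub_le_of_projGradStep (hs : Convex ℝ s) (hconv : ConvexOn ℝ s Φ)
    (hG : ∀ u ∈ s, HasGradientAt Φ (G u) u) {L : ℝ}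
    (hLip : ∀ u ∈ s, ∀ v ∈ s, ‖G u - G v‖ ≤ L * ‖u - v‖) {ω : ℝ} (hω : 0 < ω) (hωL : ω * L ≤ 1)
    {K : Set X} (hK : Convex ℝ K) (hKs : K ⊆ s) {z p : X} (hz : z ∈ s) (hp : p ∈ K)
    (hproj : ∀ v ∈ K, ‖z - ω • G z - p‖ ≤ ‖z - ω • G z - v‖) {u : X} (hu : u ∈ K) :
    2 * ω * (Φ p - Φ u) ≤ ‖z - u‖ ^ 2 - ‖p - u‖ ^ 2 := by
  have hgap : Φ p - Φ u ≤ ⟪G z, p - u⟫ + L / 2 * ‖p - z‖ ^ 2 := by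
    have hdesc := hs.le_add_inner_sub_add_sq hG hLip hz (hKs hp)
    have hgrad := hconv.add_inner_sub_le hz (hKs hu) (hG z hz)
    have hsplit : ⟪G z, p - u⟫ = ⟪G z, p - z⟫ - ⟪G z, u - z⟫ := by
      rw [← inner_sub_right, sub_sub_sub_cancel_right]
    linarith
  have hvi : ω * ⟪G z, p - u⟫ ≤ ⟪z - p, p - u⟫ := by
    have := hK.real_inner_sub_sub_nonpos hp hproj hu
    rw [sub_right_comm, inner_sub_left, real_inner_smul_left, ← neg_sub p u, inner_neg_right,
      inner_neg_right] at this
    linarith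
  calc 2 * ω * (Φ p - Φ u) ≤ 2 * (ω * ⟪G z, p - u⟫) + ω * L * ‖p - z‖ ^ 2 := by nlinarith
    _ ≤ 2 * ⟪z - p, p - u⟫ + ‖p - z‖ ^ 2 := by nlinarith [sq_nonneg ‖p - z‖]
    _ = ‖z - u‖ ^ 2 - ‖p - u‖ ^ 2 := by
      rw [show z - u = (z - p) + (p - u) by abel, norm_add_sq_real, norm_sub_rev]; ring

theorem ConvexOn.exists_isMinOn_closedBall (hconv : ConvexOn ℝ s Φ)
    (hG : ∀ u ∈ s, HasGradientAt Φ (G u) u) {c : X} {r : ℝ} (hr : 0 ≤ r)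
    (hcs : closedBall c r ⊆ s) : ∃ m ∈ closedBall c r, IsMinOn Φ (closedBall c r) m := by
  have hc : c ∈ closedBall c r := mem_closedBall_self hr
  have hbdd : BddBelow (Φ '' closedBall c r) := by
    refine ⟨Φ c - ‖G c‖ * r, Set.forall_mem_image.2 fun v hv => ?_⟩
    have h1 := hconv.add_inner_sub_le (hcs hc) (hcs hv) (hG c (hcs hc))
    have h2 : -(‖G c‖ * r) ≤ ⟪G c, v - c⟫ := by
      refine (neg_le_neg ?_).trans (neg_abs_le _)
      exact (abs_real_inner_le_norm _ _).trans
        (mul_le_mul_of_nonneg_left (mem_closedBall_iff_norm.1 hv) (norm_nonneg _))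
    linarith
  obtain ⟨a, -, ha, hamem⟩ := exists_seq_tendsto_sInf ⟨Φ c, Set.mem_image_of_mem Φ hc⟩ hbdd
  choose v hv hva using hamem
  obtain ⟨m, hm, φ, hφ, hvm⟩ := exists_strictMono_weaklyTendsto_of_mem_closedBall hv
  refine ⟨m, hm, fun w hw => le_trans ?_ (csInf_le hbdd (Set.mem_image_of_mem Φ hw))⟩
  have hlim : Tendsto (fun n => Φ m + ⟪G m, v (φ n) - m⟫) atTop (𝓝 (Φ m)) := by
    simpa [real_inner_comm (G m)] using ((hvm.sub_const m) (G m)).const_add (Φ m)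
  refine le_of_tendsto_of_tendsto' hlim (ha.comp hφ.tendsto_atTop) fun n => ?_
  rw [Function.comp_apply, ← hva]
  exact hconv.add_inner_sub_le (hcs hm) (hcs (hv _)) (hG m (hcs hm))

end ConvexSmooth

noncomputable def nesterovWeight (α : ℝ) (k : ℕ) : ℝ := ((k : ℝ) + α - 2) / (α - 1)

section NesterovWeight

variable {α : ℝ}

theorem nesterovWeight_pos (hα : 2 < α) (k : ℕ) : 0 < nesterovWeight α k := by
  unfold nesterovWeight; have := k.cast_nonneg (α := ℝ); apply div_pos <;> linarith

theorem one_le_nesterovWeight_succ (hα : 1 < α) (k : ℕ) : 1 ≤ nesterovWeight α (k + 1) := by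
  unfold nesterovWeight
  rw [one_le_div (by linarith)]; push_cast; linarith [k.cast_nonneg (α := ℝ)]

theorem nesterovWeight_zero_le_one (hα : 1 < α) : nesterovWeight α 0 ≤ 1 := by
  unfold nesterovWeight; rw [div_le_one (by linarith)]; push_cast; linarith

theorem sq_nesterovWeight_succ_sub_le (hα : 3 ≤ α) (k : ℕ) :
    nesterovWeight α (k + 1) ^ 2 - nesterovWeight α (k + 1) ≤ nesterovWeight α k ^ 2 := by
  unfold nesterovWeight
  have hα1 : 0 < α - 1 := by linarith
  have hsucc : ((((k + 1 : ℕ) : ℝ) + α - 2) / (α - 1)) ^ 2 - (((k + 1 : ℕ) : ℝ) + α - 2) / (α - 1)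
      = (((k : ℝ) + α - 1) ^ 2 - ((k : ℝ) + α - 1) * (α - 1)) / (α - 1) ^ 2 := by
    field_simp; push_cast; ring
  rw [hsucc, div_pow]
  gcongr
  nlinarith [mul_nonneg (k.cast_nonneg (α := ℝ)) (sub_nonneg.2 hα)]

theorem nesterov_momentum_eq (hα : 1 < α) (k : ℕ) :
    ((k : ℝ) - 1) / ((k : ℝ) + α - 1) = (nesterovWeight α k - 1) / nesterovWeight α (k + 1) := by
  unfold nesterovWeight
  have hα1 : α - 1 ≠ 0 := by linarith
  rw [div_sub_one hα1, div_div_div_cancel_right₀ hα1]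
  push_cast; ring_nf

theorem abs_nesterov_momentum_le_one (hα : 2 ≤ α) (k : ℕ) :
    |((k : ℝ) - 1) / ((k : ℝ) + α - 1)| ≤ 1 := by
  have hk := k.cast_nonneg (α := ℝ)
  rw [abs_div, abs_of_pos (by linarith : (0 : ℝ) < k + α - 1), div_le_one (by linarith)]
  exact abs_le.2 ⟨by linarith, by linarith⟩

end NesterovWeight

/-- At `k = 0` the truncated `x (k - 1) = x 0` plays the role of `x₋₁ = x₀`. -/
noncomputable def nesterovEnergy {X : Type*} [NormedAddCommGroup X] [NormedSpace ℝ X]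
    (Φ : X → ℝ) (ω α : ℝ) (x : ℕ → X) (m : X) (k : ℕ) : ℝ :=
  2 * ω * nesterovWeight α k ^ 2 * (Φ (x k) - Φ m) +
    ‖nesterovWeight α k • x k - (nesterovWeight α k - 1) • x (k - 1) - m‖ ^ 2

section Nesterov

variable {X : Type*} [NormedAddCommGroup X] [InnerProductSpace ℝ X] [CompleteSpace X]
  {s K : Set X} {Φ : X → ℝ} {G : X → X} {L ω α : ℝ} {x z : ℕ → X} {m : X}

theorem nesterovEnergy_succ_le (hs : Convex ℝ s) (hconv : ConvexOn ℝ s Φ)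
    (hG : ∀ u ∈ s, HasGradientAt Φ (G u) u)
    (hLip : ∀ u ∈ s, ∀ v ∈ s, ‖G u - G v‖ ≤ L * ‖u - v‖) (hω : 0 < ω) (hωL : ω * L ≤ 1)
    (hK : Convex ℝ K) (hKs : K ⊆ s) (hα : 3 ≤ α) (hxK : ∀ k, x k ∈ K) (hzs : ∀ k, z k ∈ s)
    (hz : ∀ k : ℕ, z k = x k + (((k : ℝ) - 1) / ((k : ℝ) + α - 1)) • (x k - x (k - 1)))
    (hproj : ∀ k, ∀ v ∈ K, ‖z k - ω • G (z k) - x (k + 1)‖ ≤ ‖z k - ω • G (z k) - v‖)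
    (hm : m ∈ K) (hmin : IsMinOn Φ K m) (k : ℕ) :
    nesterovEnergy Φ ω α x m (k + 1) ≤ nesterovEnergy Φ ω α x m k := by
  set t := nesterovWeight α k
  set T := nesterovWeight α (k + 1)
  have hT : 1 ≤ T := one_le_nesterovWeight_succ (by linarith) k
  have hT0 : T ≠ 0 := by positivity
  have hT₁ : T⁻¹ ≤ 1 := inv_le_one_of_one_le₀ hT
  -- `T • (z k - v)` and `T • (x (k + 1) - v)` are the energy's vectors at `k` and `k + 1`.
  set v := x k + T⁻¹ • (m - x k)
  have hv : v ∈ K := hK.add_smul_sub_mem (hxK k) hm ⟨by positivity, hT₁⟩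
  have hstep := two_mul_sub_le_of_projGradStep hs hconv hG hLip hω hωL hK hKs (hzs k)
    (hxK (k + 1)) (hproj k) hv
  have hΦv : Φ v ≤ (1 - T⁻¹) * Φ (x k) + T⁻¹ * Φ m := by
    have hv' : v = (1 - T⁻¹) • x k + T⁻¹ • m := by simp only [v]; module
    simpa only [hv', smul_eq_mul] using
      hconv.2 (hKs (hxK k)) (hKs hm) (sub_nonneg.2 hT₁) (by positivity) (sub_add_cancel 1 _)
  have hzv : T • (z k - v) = t • x k - (t - 1) • x (k - 1) - m := by
    have hβ : ((k : ℝ) - 1) / ((k : ℝ) + α - 1) = (t - 1) / T :=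
      nesterov_momentum_eq (by linarith) k
    rw [hz k, hβ]
    match_scalars <;> field_simp; ring
  have hxv : T • (x (k + 1) - v) = T • x (k + 1) - (T - 1) • x (k + 1 - 1) - m := by
    simp only [v, Nat.add_sub_cancel, smul_sub, smul_add, smul_smul, mul_inv_cancel₀ hT0]
    module
  have hmono : 2 * ω * ((T ^ 2 - T) * (Φ (x k) - Φ m)) ≤ 2 * ω * (t ^ 2 * (Φ (x k) - Φ m)) := by
    gcongr
    · exact sub_nonneg.2 (hmin (hxK k))
    · exact sq_nesterovWeight_succ_sub_le hα k
  have hnorm : ∀ u : X, ‖T • u‖ ^ 2 = T ^ 2 * ‖u‖ ^ 2 := fun u => by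
    rw [norm_smul, mul_pow, Real.norm_eq_abs, sq_abs]
  unfold nesterovEnergy
  rw [← hzv, ← hxv, hnorm, hnorm]
  have h1 := mul_le_mul_of_nonneg_left hstep (sq_nonneg T)
  have h2 := mul_le_mul_of_nonneg_left hΦv (by positivity : 0 ≤ 2 * ω * T ^ 2)
  have h3 : 2 * ω * T ^ 2 * ((1 - T⁻¹) * Φ (x k) + T⁻¹ * Φ m)
      = 2 * ω * ((T ^ 2 - T) * Φ (x k) + T * Φ m) := by field_simp
  linarith

theorem nesterov_objective_gap_le (hs : Convex ℝ s) (hconv : ConvexOn ℝ s Φ)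
    (hG : ∀ u ∈ s, HasGradientAt Φ (G u) u)
    (hLip : ∀ u ∈ s, ∀ v ∈ s, ‖G u - G v‖ ≤ L * ‖u - v‖) (hω : 0 < ω) (hωL : ω * L ≤ 1)
    (hK : Convex ℝ K) (hKs : K ⊆ s) (hα : 3 ≤ α) (hxK : ∀ k, x k ∈ K) (hzs : ∀ k, z k ∈ s)
    (hz : ∀ k : ℕ, z k = x k + (((k : ℝ) - 1) / ((k : ℝ) + α - 1)) • (x k - x (k - 1)))
    (hproj : ∀ k, ∀ v ∈ K, ‖z k - ω • G (z k) - x (k + 1)‖ ≤ ‖z k - ω • G (z k) - v‖)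
    (hm : m ∈ K) (hmin : IsMinOn Φ K m) (k : ℕ) :
    2 * ω * nesterovWeight α k ^ 2 * (Φ (x k) - Φ m)
      ≤ 2 * ω * (Φ (x 0) - Φ m) + ‖x 0 - m‖ ^ 2 := by
  have hE := antitone_nat_of_succ_le (nesterovEnergy_succ_le hs hconv hG hLip hω hωL hK hKs hα
    hxK hzs hz hproj hm hmin) (Nat.zero_le k)
  have hw0 : nesterovWeight α 0 • x 0 - (nesterovWeight α 0 - 1) • x (0 - 1) - m = x 0 - m := by
    simp only [Nat.zero_sub]; module
  have ht0 : nesterovWeight α 0 ^ 2 ≤ 1 := pow_le_one₀ (nesterovWeight_pos (by linarith) 0).le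
    (nesterovWeight_zero_le_one (by linarith))
  have hΦ0 := mul_le_mul_of_nonneg_right ht0 (sub_nonneg.2 (hmin (hxK 0)))
  unfold nesterovEnergy at hE
  rw [hw0] at hE
  nlinarith [sq_nonneg ‖nesterovWeight α k • x k - (nesterovWeight α k - 1) • x (k - 1) - m‖]

theorem nesterov_closedBall_rate (hs : Convex ℝ s) (hconv : ConvexOn ℝ s Φ)
    (hG : ∀ u ∈ s, HasGradientAt Φ (G u) u)
    (hLip : ∀ u ∈ s, ∀ v ∈ s, ‖G u - G v‖ ≤ L * ‖u - v‖) (hω : 0 < ω) (hωL : ω * L ≤ 1)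
    (hα : 3 ≤ α) {c : X} {r : ℝ} (hcs : closedBall c (3 * r) ⊆ s)
    (hΦ : ∀ u ∈ closedBall c r, 0 ≤ Φ u) {P : X → X} (hP_mem : ∀ u, P u ∈ closedBall c r)
    (hP_proj : ∀ u, ∀ v ∈ closedBall c r, ‖u - P u‖ ≤ ‖u - v‖) (hx0 : x 0 = c)
    (hz : ∀ k : ℕ, z k = x k + (((k : ℝ) - 1) / ((k : ℝ) + α - 1)) • (x k - x (k - 1)))
    (hx : ∀ k, x (k + 1) = P (z k - ω • G (z k))) {u : X} (hu : u ∈ closedBall c r) (k : ℕ) :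
    2 * ω * nesterovWeight α k ^ 2 * (Φ (x k) - Φ u) ≤ 2 * ω * Φ c + r ^ 2 := by
  have hr : 0 ≤ r := dist_nonneg.trans hu
  have hKs : closedBall c r ⊆ s := (closedBall_subset_closedBall (by linarith)).trans hcs
  obtain ⟨m, hm, hmin⟩ := hconv.exists_isMinOn_closedBall hG hr hKs
  have hxK := forall_mem_of_succ_eq (hx0 ▸ mem_closedBall_self hr) hP_mem hx
  have hzs (k : ℕ) : z k ∈ s := hcs <| hz k ▸
    add_smul_sub_mem_closedBall (hxK k) (hxK _) (abs_nesterov_momentum_le_one (by linarith) k)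
  have hgap := nesterov_objective_gap_le hs hconv hG hLip hω hωL (convex_closedBall c r) hKs hα
    hxK hzs hz (fun k => hx k ▸ hP_proj _) hm hmin k
  have hcm : ‖c - m‖ ^ 2 ≤ r ^ 2 := by
    rw [← dist_eq_norm']; exact pow_le_pow_left₀ dist_nonneg hm 2
  have hmu := mul_le_mul_of_nonneg_left (isMinOn_iff.1 hmin u hu)
    (by positivity : 0 ≤ 2 * ω * nesterovWeight α k ^ 2)
  rw [hx0] at hgap
  linarith [mul_nonneg hω.le (hΦ m hm)]

end Nesterov

theorem le_add_sqrt_div_of_sq_le {r δ C t : ℝ} (hδ : 0 ≤ δ) (hC : 0 ≤ C)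
    (ht : 0 < t) (h : r ^ 2 ≤ δ ^ 2 + C / t ^ 2) : r ≤ δ + √C / t := by
  have hsq : (√C / t) ^ 2 = C / t ^ 2 := by rw [div_pow, Real.sq_sqrt hC]
  have : 0 ≤ √C / t := by positivity
  nlinarith

section InverseProblem

variable {X Y : Type*} [NormedAddCommGroup X] [InnerProductSpace ℝ X] [CompleteSpace X]
  [NormedAddCommGroup Y] [InnerProductSpace ℝ Y] [CompleteSpace Y]

theorem HasFDerivAt.hasGradientAt_half_sq_norm_sub {F : X → Y} {T : X →L[ℝ] Y} {u : X}
    (hF : HasFDerivAt F T u) (b : Y) :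
    HasGradientAt (fun v => 1 / 2 * ‖F v - b‖ ^ 2) (ContinuousLinearMap.adjoint T (F u - b)) u := by
  refine hasGradientAt_iff_hasFDerivAt.2
    (((hF.sub_const b).norm_sq.const_mul (1 / 2)).congr_fderiv ?_)
  ext h
  simp [ContinuousLinearMap.adjoint_inner_left]

theorem nesterov_residual_le {x₀ : X} {ρ : ℝ} {F : X → Y} {F' : X → X →L[ℝ] Y}
    (hF : ∀ u ∈ closedBall x₀ (6 * ρ), HasFDerivAt F (F' u) u)
    {ωb : ℝ} (hωb : ∀ u ∈ closedBall x₀ (6 * ρ), ‖F' u‖ ≤ ωb)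
    {xstar : X} (hxstar : xstar ∈ closedBall x₀ ρ) {δ : ℝ} {yδ : Y} (hyδ : ‖F xstar - yδ‖ ≤ δ)
    {L : ℝ} (hconv : ConvexOn ℝ (closedBall x₀ (6 * ρ)) (fun u => 1 / 2 * ‖F u - yδ‖ ^ 2))
    (hLip : ∀ u ∈ closedBall x₀ (6 * ρ), ∀ v ∈ closedBall x₀ (6 * ρ),
      ‖ContinuousLinearMap.adjoint (F' u) (F u - yδ) -
        ContinuousLinearMap.adjoint (F' v) (F v - yδ)‖ ≤ L * ‖u - v‖)
    {α ω : ℝ} (hα : 3 < α) (hω : 0 < ω) (hωL : ω < 1 / L)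
    {P : X → X} (hP_mem : ∀ u, P u ∈ closedBall x₀ (2 * ρ))
    (hP_proj : ∀ u, ∀ v ∈ closedBall x₀ (2 * ρ), ‖u - P u‖ ≤ ‖u - v‖)
    {x z : ℕ → X} (hx0 : x 0 = x₀)
    (hz : ∀ k : ℕ, z k = x k + (((k : ℝ) - 1) / ((k : ℝ) + α - 1)) • (x k - x (k - 1)))
    (hx : ∀ k : ℕ, x (k + 1)
      = P (z k + ω • (ContinuousLinearMap.adjoint (F' (z k))) (yδ - F (z k)))) (k : ℕ) :
    ‖F (x k) - yδ‖
      ≤ δ + √((ω * (ωb * ρ + δ) ^ 2 + 4 * ρ ^ 2) / ω) * (α - 1) / ((k : ℝ) + (α - 2)) := by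
  have hρ : 0 ≤ ρ := dist_nonneg.trans hxstar
  have hδ : 0 ≤ δ := (norm_nonneg _).trans hyδ
  have hx₀ : x₀ ∈ closedBall x₀ (6 * ρ) := mem_closedBall_self (by linarith)
  set G : X → X := fun u => ContinuousLinearMap.adjoint (F' u) (F u - yδ)
  have hx' (k : ℕ) : x (k + 1) = P (z k - ω • G (z k)) := by
    rw [hx k, ← neg_sub (F (z k)), map_neg, smul_neg, ← sub_eq_add_neg]
  have hωL' : ω * L ≤ 1 := by
    have hL : 0 < L := one_div_pos.1 (hω.trans hωL)
    exact ((lt_div_iff₀ hL).1 hωL).le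
  have hrate := nesterov_closedBall_rate (convex_closedBall _ _) hconv
    (fun u hu => (hF u hu).hasGradientAt_half_sq_norm_sub yδ) hLip hω hωL' hα.le
    (closedBall_subset_closedBall (by linarith)) (fun _ _ => by positivity) hP_mem hP_proj hx0
    hz hx' (closedBall_subset_closedBall (by linarith) hxstar) k
  have hFx₀ : ‖F x₀ - yδ‖ ≤ ωb * ρ + δ := by
    have hmv := (convex_closedBall x₀ (6 * ρ)).norm_image_sub_le_of_norm_hasFDerivWithin_le
      (fun u hu => (hF u hu).hasFDerivWithinAt) hωb
      (closedBall_subset_closedBall (by linarith) hxstar) hx₀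
    have hxs : ‖x₀ - xstar‖ ≤ ρ := by rw [← dist_eq_norm']; exact hxstar
    have hωb₀ : 0 ≤ ωb := (norm_nonneg _).trans (hωb x₀ hx₀)
    calc ‖F x₀ - yδ‖ ≤ ‖F x₀ - F xstar‖ + ‖F xstar - yδ‖ := norm_sub_le_norm_sub_add_norm_sub _ _ _
      _ ≤ ωb * ρ + δ := by nlinarith
  have ht : 0 < nesterovWeight α k := nesterovWeight_pos (by linarith) k
  have hsq : ‖F (x k) - yδ‖ ^ 2
      ≤ δ ^ 2 + (ω * (ωb * ρ + δ) ^ 2 + 4 * ρ ^ 2) / ω / nesterovWeight α k ^ 2 := by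
    rw [div_div, ← sub_le_iff_le_add', le_div_iff₀ (by positivity)]
    have h1 := mul_le_mul_of_nonneg_left (pow_le_pow_left₀ (norm_nonneg _) hyδ 2)
      (by positivity : 0 ≤ ω * nesterovWeight α k ^ 2)
    have h2 := mul_le_mul_of_nonneg_left (pow_le_pow_left₀ (norm_nonneg _) hFx₀ 2) hω.le
    linarith
  convert le_add_sqrt_div_of_sq_le hδ (by positivity) ht hsq using 2
  unfold nesterovWeight
  rw [div_div_eq_mul_div, add_sub_assoc]

end InverseProblem

section Discrepancy

variable {r : ℕ → ℝ} {δ τ c a : ℝ}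

theorem le_mul_of_le_add_div (hδ : 0 < δ) (hτ : 1 < τ) (ha : 0 < a)
    (hr : ∀ k : ℕ, r k ≤ δ + c / (k + a)) {k : ℕ} (hk : c / ((τ - 1) * δ) ≤ k) :
    r k ≤ τ * δ := by
  have hk' : c ≤ (τ - 1) * δ * (k + a) := by
    rw [div_le_iff₀ (by nlinarith)] at hk; nlinarith [mul_pos (mul_pos (sub_pos.2 hτ) hδ) ha]
  have : c / (k + a) ≤ (τ - 1) * δ := by rw [div_le_iff₀ (by positivity)]; exact hk'
  linarith [hr k]

theorem exists_discrepancy_index (hδ : 0 < δ) (hτ : 1 < τ) (ha : 0 < a)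
    (hr : ∀ k : ℕ, r k ≤ δ + c / (k + a)) :
    ∃ ks : ℕ, r ks ≤ τ * δ ∧ ∀ k : ℕ, k < ks → ¬ r k ≤ τ * δ := by
  classical
  have hex : ∃ k, r k ≤ τ * δ := ⟨_, le_mul_of_le_add_div hδ hτ ha hr (Nat.le_ceil _)⟩
  exact ⟨Nat.find hex, Nat.find_spec hex, fun k => Nat.find_min hex⟩

theorem discrepancy_index_lt (hδ : 0 < δ) (hτ : 1 < τ) (ha : 0 < a) (hc : 0 ≤ c)
    (hr : ∀ k : ℕ, r k ≤ δ + c / (k + a)) {ks : ℕ} (hks : ∀ k : ℕ, k < ks → ¬ r k ≤ τ * δ) :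
    (ks : ℝ) < c / ((τ - 1) * δ) + 1 := by
  have hK := le_mul_of_le_add_div hδ hτ ha hr (Nat.le_ceil (c / ((τ - 1) * δ)))
  have hle : ks ≤ ⌈c / ((τ - 1) * δ)⌉₊ := not_lt.1 fun hlt => hks _ hlt hK
  have hτδ : 0 < (τ - 1) * δ := by nlinarith
  exact (Nat.cast_le.2 hle).trans_lt (Nat.ceil_lt_add_one (by positivity))

end Discrepancy

section WeakLimits

variable {X Y : Type*} [NormedAddCommGroup X] [InnerProductSpace ℝ X] [CompleteSpace X]
  [TopologicalSpace Y] {F : X → Y} {c : X} {R : ℝ} {y : Y} {u : ℕ → X}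

theorem exists_strictMono_weaklyTendsto_of_weakSeqClosed
    (hwsc : ∀ (u : ℕ → X) (u' : X) (v : Y), (∀ n, u n ∈ closedBall c R) →
      WeaklyTendsto u u' → Tendsto (fun n => F (u n)) atTop (𝓝 v) →
      u' ∈ closedBall c R ∧ F u' = v)
    (hu : ∀ n, u n ∈ closedBall c R) (hFu : Tendsto (fun n => F (u n)) atTop (𝓝 y)) :
    ∃ xt ∈ {v : X | v ∈ closedBall c R ∧ F v = y},
      ∃ φ : ℕ → ℕ, StrictMono φ ∧ WeaklyTendsto (u ∘ φ) xt := by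
  obtain ⟨xt, -, φ, hφ, hxt⟩ := exists_strictMono_weaklyTendsto_of_mem_closedBall hu
  exact ⟨xt, hwsc _ _ _ (fun n => hu (φ n)) hxt (hFu.comp hφ.tendsto_atTop), φ, hφ, hxt⟩

theorem weaklyTendsto_of_weakSeqClosed_of_eq_singleton
    (hwsc : ∀ (u : ℕ → X) (u' : X) (v : Y), (∀ n, u n ∈ closedBall c R) →
      WeaklyTendsto u u' → Tendsto (fun n => F (u n)) atTop (𝓝 v) →
      u' ∈ closedBall c R ∧ F u' = v)
    (hu : ∀ n, u n ∈ closedBall c R) (hFu : Tendsto (fun n => F (u n)) atTop (𝓝 y))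
    {xt : X} (hS : {v : X | v ∈ closedBall c R ∧ F v = y} = {xt}) : WeaklyTendsto u xt :=
  fun h => tendsto_of_subseq_tendsto fun ns hns => by
    obtain ⟨xt', hxt', φ, -, hφ⟩ := exists_strictMono_weaklyTendsto_of_weakSeqClosed hwsc
      (fun n => hu (ns n)) (hFu.comp hns)
    rw [hS, Set.mem_singleton_iff] at hxt'
    exact ⟨φ, hxt' ▸ hφ h⟩

end WeakLimits

theorem nesterov_regularization_discrepancy_general
    {X Y : Type*} [NormedAddCommGroup X] [InnerProductSpace ℝ X] [CompleteSpace X]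
    [NormedAddCommGroup Y] [InnerProductSpace ℝ Y] [CompleteSpace Y]
    (x₀ : X) (ρ : ℝ)
    (F : X → Y) (F' : X → X →L[ℝ] Y)
    (hF : ∀ u ∈ closedBall x₀ (6 * ρ), HasFDerivAt F (F' u) u)
    (ωb : ℝ) (hωb : ∀ u ∈ closedBall x₀ (6 * ρ), ‖F' u‖ ≤ ωb)
    -- weak sequential closedness of `F` on `B_{2ρ}(x₀)`
    (hwsc : ∀ (u : ℕ → X) (u' : X) (v : Y),
      (∀ n, u n ∈ closedBall x₀ (2 * ρ)) →
      (∀ h : X, Tendsto (fun n => ⟪u n, h⟫) atTop (nhds ⟪u', h⟫)) →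
      Tendsto (fun n => F (u n)) atTop (nhds v) →
      u' ∈ closedBall x₀ (2 * ρ) ∧ F u' = v)
    (y : Y) (xstar : X) (hxstar : xstar ∈ closedBall x₀ ρ) (hFxstar : F xstar = y)
    (L : ℝ)
    -- convexity and uniform Lipschitz continuity of the gradients of all the `Φ^δ`
    (hconvδ : ∀ δ : ℝ, 0 ≤ δ → ∀ yδ : Y, ‖y - yδ‖ ≤ δ →
      ConvexOn ℝ (closedBall x₀ (6 * ρ)) (fun u => (1 / 2) * ‖F u - yδ‖ ^ 2))
    (hLipδ : ∀ δ : ℝ, 0 ≤ δ → ∀ yδ : Y, ‖y - yδ‖ ≤ δ →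
      ∀ u ∈ closedBall x₀ (6 * ρ), ∀ v ∈ closedBall x₀ (6 * ρ),
        ‖(ContinuousLinearMap.adjoint (F' u)) (F u - yδ) -
          (ContinuousLinearMap.adjoint (F' v)) (F v - yδ)‖ ≤ L * ‖u - v‖)
    (α ω : ℝ) (hα : 3 < α) (hω : 0 < ω) (hωL : ω < 1 / L)
    (P : X → X)
    (hP_mem : ∀ u, P u ∈ closedBall x₀ (2 * ρ))
    (hP_proj : ∀ u, ∀ v ∈ closedBall x₀ (2 * ρ), ‖u - P u‖ ≤ ‖u - v‖)
    (τ : ℝ) (hτ : 1 < τ) :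
    -- (i) finiteness of the discrepancy stopping index for every `δ > 0`
    (∀ δ : ℝ, 0 < δ → ∀ yδ : Y, ‖y - yδ‖ ≤ δ → ∀ x z : ℕ → X, x 0 = x₀ →
      (∀ k : ℕ, z k = x k + (((k : ℝ) - 1) / ((k : ℝ) + α - 1)) • (x k - x (k - 1))) →
      (∀ k : ℕ, x (k + 1)
        = P (z k + ω • (ContinuousLinearMap.adjoint (F' (z k))) (yδ - F (z k)))) →
      ∃ ks : ℕ, ‖F (x ks) - yδ‖ ≤ τ * δ ∧ ∀ k : ℕ, k < ks → ¬ (‖F (x k) - yδ‖ ≤ τ * δ)) ∧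
    -- (i) the rate `k* = O(δ⁻¹)` as `δ → 0`
    (∃ C : ℝ, 0 < C ∧ ∃ δ₀ : ℝ, 0 < δ₀ ∧
      ∀ δ : ℝ, 0 < δ → δ ≤ δ₀ → ∀ yδ : Y, ‖y - yδ‖ ≤ δ → ∀ x z : ℕ → X, x 0 = x₀ →
      (∀ k : ℕ, z k = x k + (((k : ℝ) - 1) / ((k : ℝ) + α - 1)) • (x k - x (k - 1))) →
      (∀ k : ℕ, x (k + 1)
        = P (z k + ω • (ContinuousLinearMap.adjoint (F' (z k))) (yδ - F (z k)))) →
      ∀ ks : ℕ, ‖F (x ks) - yδ‖ ≤ τ * δ →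
        (∀ k : ℕ, k < ks → ¬ (‖F (x k) - yδ‖ ≤ τ * δ)) →
        (ks : ℝ) ≤ C / δ) ∧
    -- (ii) and (iii): weak convergence of the stopped iterates along `δ_n → 0`
    (∀ δn : ℕ → ℝ, (∀ n, 0 < δn n) → Tendsto δn atTop (nhds 0) →
      ∀ yn : ℕ → Y, (∀ n, ‖y - yn n‖ ≤ δn n) →
      ∀ x z : ℕ → ℕ → X, (∀ n, x n 0 = x₀) →
      (∀ n k, z n k = x n k + (((k : ℝ) - 1) / ((k : ℝ) + α - 1)) • (x n k - x n (k - 1))) →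
      (∀ n k, x n (k + 1)
        = P (z n k + ω • (ContinuousLinearMap.adjoint (F' (z n k))) (yn n - F (z n k)))) →
      ∀ ks : ℕ → ℕ,
      (∀ n, ‖F (x n (ks n)) - yn n‖ ≤ τ * δn n) →
      (∀ n, ∀ k : ℕ, k < ks n → ¬ (‖F (x n k) - yn n‖ ≤ τ * δn n)) →
      (∃ xt ∈ {u : X | u ∈ closedBall x₀ (2 * ρ) ∧ F u = y},
        ∃ φ : ℕ → ℕ, StrictMono φ ∧
          ∀ h : X, Tendsto (fun m => ⟪x (φ m) (ks (φ m)), h⟫) atTop (nhds ⟪xt, h⟫)) ∧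
      (∀ xt : X, {u : X | u ∈ closedBall x₀ (2 * ρ) ∧ F u = y} = {xt} →
        ∀ h : X, Tendsto (fun n => ⟪x n (ks n), h⟫) atTop (nhds ⟪xt, h⟫))) := by
  have hρ : 0 ≤ ρ := dist_nonneg.trans hxstar
  have hωb₀ : 0 ≤ ωb := (norm_nonneg _).trans (hωb x₀ (mem_closedBall_self (by positivity)))
  have ha : 0 < α - 2 := by linarith
  have hres (δ : ℝ) (yδ : Y) (hyδ : ‖y - yδ‖ ≤ δ) (x z : ℕ → X) :=
    nesterov_residual_le (x := x) (z := z) hF hωb hxstar (hFxstar ▸ hyδ)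
      (hconvδ δ ((norm_nonneg _).trans hyδ) yδ hyδ)
      (hLipδ δ ((norm_nonneg _).trans hyδ) yδ hyδ) hα hω hωL hP_mem hP_proj
  refine ⟨fun δ hδ yδ hyδ x z hx0 hz hx =>
    exists_discrepancy_index hδ hτ ha (hres δ yδ hyδ x z hx0 hz hx), ?_, ?_⟩
  · set c := √((ω * (ωb * ρ + 1) ^ 2 + 4 * ρ ^ 2) / ω) * (α - 1)
    have hc : 0 ≤ c := mul_nonneg (Real.sqrt_nonneg _) (by linarith)
    refine ⟨c / (τ - 1) + 1, add_pos_of_nonneg_of_pos (div_nonneg hc (by linarith)) one_pos,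
      1, one_pos, fun δ hδ hδ1 yδ hyδ x z hx0 hz hx ks _ hks => ?_⟩
    have hr (k : ℕ) : ‖F (x k) - yδ‖ ≤ δ + c / (k + (α - 2)) :=
      (hres δ yδ hyδ x z hx0 hz hx k).trans (by simp only [c]; gcongr; linarith)
    calc (ks : ℝ) ≤ c / ((τ - 1) * δ) + 1 :=
          (discrepancy_index_lt hδ hτ ha hc hr hks).le
      _ ≤ (c / (τ - 1) + 1) / δ := by
          rw [add_div, div_div]; gcongr; exact one_le_one_div hδ hδ1
  · intro δn _ hδn yn hyn x z hx0 hz hx ks hks _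
    have hmem (n : ℕ) := forall_mem_of_succ_eq (hx0 n ▸ mem_closedBall_self (by positivity))
      hP_mem (hx n) (ks n)
    have hFu := tendsto_of_norm_sub_le_mul hδn hks hyn
    exact ⟨exists_strictMono_weaklyTendsto_of_weakSeqClosed hwsc hmem hFu,
      fun xt hS => weaklyTendsto_of_weakSeqClosed_of_eq_singleton hwsc hmem hFu hS⟩

/-- Under uniform convexity of all `Φ^δ`, with the discrepancy principle
`‖F(x_{k*}^δ) − y^δ‖ ≤ τδ`: (i) the stopping index `k*` is finite for every `δ > 0` and
`k* = O(δ⁻¹)` as `δ → 0`; (ii) along any sequence `δ_n → 0` a subsequence of the stopped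
iterates converges weakly to some `x̃ ∈ S`; (iii) if `S` is a singleton, the whole sequence
of stopped iterates converges weakly to `x̃`. -/
theorem nesterov_regularization_discrepancy
    {X Y : Type*} [NormedAddCommGroup X] [InnerProductSpace ℝ X] [CompleteSpace X]
    [NormedAddCommGroup Y] [InnerProductSpace ℝ Y] [CompleteSpace Y]
    (x₀ : X) (ρ : ℝ) (hρ : 0 < ρ)
    (F : X → Y) (F' : X → X →L[ℝ] Y)
    (hF : ∀ u ∈ closedBall x₀ (6 * ρ), HasFDerivAt F (F' u) u)
    (ωb : ℝ) (hωb : ∀ u ∈ closedBall x₀ (6 * ρ), ‖F' u‖ ≤ ωb)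
    -- weak sequential closedness of `F` on `B_{2ρ}(x₀)`
    (hwsc : ∀ (u : ℕ → X) (u' : X) (v : Y),
      (∀ n, u n ∈ closedBall x₀ (2 * ρ)) →
      (∀ h : X, Tendsto (fun n => ⟪u n, h⟫) atTop (nhds ⟪u', h⟫)) →
      Tendsto (fun n => F (u n)) atTop (nhds v) →
      u' ∈ closedBall x₀ (2 * ρ) ∧ F u' = v)
    (y : Y) (xstar : X) (hxstar : xstar ∈ closedBall x₀ ρ) (hFxstar : F xstar = y)
    (L : ℝ) (hL : 0 < L)
    -- convexity and uniform Lipschitz continuity of the gradients of all the `Φ^δ`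
    (hconvδ : ∀ δ : ℝ, 0 ≤ δ → ∀ yδ : Y, ‖y - yδ‖ ≤ δ →
      ConvexOn ℝ (closedBall x₀ (6 * ρ)) (fun u => (1 / 2) * ‖F u - yδ‖ ^ 2))
    (hLipδ : ∀ δ : ℝ, 0 ≤ δ → ∀ yδ : Y, ‖y - yδ‖ ≤ δ →
      ∀ u ∈ closedBall x₀ (6 * ρ), ∀ v ∈ closedBall x₀ (6 * ρ),
        ‖(ContinuousLinearMap.adjoint (F' u)) (F u - yδ) -
          (ContinuousLinearMap.adjoint (F' v)) (F v - yδ)‖ ≤ L * ‖u - v‖)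
    (α ω : ℝ) (hα : 3 < α) (hω : 0 < ω) (hωL : ω < 1 / L)
    (P : X → X)
    (hP_mem : ∀ u, P u ∈ closedBall x₀ (2 * ρ))
    (hP_proj : ∀ u, ∀ v ∈ closedBall x₀ (2 * ρ), ‖u - P u‖ ≤ ‖u - v‖)
    (τ : ℝ) (hτ : 1 < τ) :
    -- (i) finiteness of the discrepancy stopping index for every `δ > 0`
    (∀ δ : ℝ, 0 < δ → ∀ yδ : Y, ‖y - yδ‖ ≤ δ → ∀ x z : ℕ → X, x 0 = x₀ →
      (∀ k : ℕ, z k = x k + (((k : ℝ) - 1) / ((k : ℝ) + α - 1)) • (x k - x (k - 1))) →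
      (∀ k : ℕ, x (k + 1)
        = P (z k + ω • (ContinuousLinearMap.adjoint (F' (z k))) (yδ - F (z k)))) →
      ∃ ks : ℕ, ‖F (x ks) - yδ‖ ≤ τ * δ ∧ ∀ k : ℕ, k < ks → ¬ (‖F (x k) - yδ‖ ≤ τ * δ)) ∧
    -- (i) the rate `k* = O(δ⁻¹)` as `δ → 0`
    (∃ C : ℝ, 0 < C ∧ ∃ δ₀ : ℝ, 0 < δ₀ ∧
      ∀ δ : ℝ, 0 < δ → δ ≤ δ₀ → ∀ yδ : Y, ‖y - yδ‖ ≤ δ → ∀ x z : ℕ → X, x 0 = x₀ →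
      (∀ k : ℕ, z k = x k + (((k : ℝ) - 1) / ((k : ℝ) + α - 1)) • (x k - x (k - 1))) →
      (∀ k : ℕ, x (k + 1)
        = P (z k + ω • (ContinuousLinearMap.adjoint (F' (z k))) (yδ - F (z k)))) →
      ∀ ks : ℕ, ‖F (x ks) - yδ‖ ≤ τ * δ →
        (∀ k : ℕ, k < ks → ¬ (‖F (x k) - yδ‖ ≤ τ * δ)) →
        (ks : ℝ) ≤ C / δ) ∧
    -- (ii) and (iii): weak convergence of the stopped iterates along `δ_n → 0`
    (∀ δn : ℕ → ℝ, (∀ n, 0 < δn n) → Tendsto δn atTop (nhds 0) →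
      ∀ yn : ℕ → Y, (∀ n, ‖y - yn n‖ ≤ δn n) →
      ∀ x z : ℕ → ℕ → X, (∀ n, x n 0 = x₀) →
      (∀ n k, z n k = x n k + (((k : ℝ) - 1) / ((k : ℝ) + α - 1)) • (x n k - x n (k - 1))) →
      (∀ n k, x n (k + 1)
        = P (z n k + ω • (ContinuousLinearMap.adjoint (F' (z n k))) (yn n - F (z n k)))) →
      ∀ ks : ℕ → ℕ,
      (∀ n, ‖F (x n (ks n)) - yn n‖ ≤ τ * δn n) →
      (∀ n, ∀ k : ℕ, k < ks n → ¬ (‖F (x n k) - yn n‖ ≤ τ * δn n)) →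
      (∃ xt ∈ {u : X | u ∈ closedBall x₀ (2 * ρ) ∧ F u = y},
        ∃ φ : ℕ → ℕ, StrictMono φ ∧
          ∀ h : X, Tendsto (fun m => ⟪x (φ m) (ks (φ m)), h⟫) atTop (nhds ⟪xt, h⟫)) ∧
      (∀ xt : X, {u : X | u ∈ closedBall x₀ (2 * ρ) ∧ F u = y} = {xt} →
        ∀ h : X, Tendsto (fun n => ⟪x n (ks n), h⟫) atTop (nhds ⟪xt, h⟫))) :=
  nesterov_regularization_discrepancy_general x₀ ρ F F' hF ωb hωb hwsc y xstar hxstar hFxstar L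
    hconvδ hLipδ α ω hα hω hωL P hP_mem hP_proj τ hτ
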